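/- arXiv:1503.08912 — 4 statements merged into one kernel-verified Lean document; each statement's English description precedes it below -/
import Mathlib

section
/- Let X be a real Banach space, x, y ∈ X with x ≠ 0, and p a norm-one functional with ⟨p, x⟩ = ‖x‖. Then ‖x + y‖ ≤ ‖x‖ + ⟨p, y⟩ + 2‖x‖ ρ_X(‖y‖/‖x‖), where ρ_X is the modulus of smoothness. -/
noncomputable def suppLam {X : Type*} [NormedAddCommGroup X] [NormedSpace ℝ X]
    (x y : X) (r : ℝ) : ℝ := sInf {l : ℝ | ‖x + r • y - l • x‖ = 1}

/-- `y` is quasiorthogonal to `x`: some norming functional of `x` vanishes at `y`. -/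
def Quasiorth {X : Type*} [NormedAddCommGroup X] [NormedSpace ℝ X] (x y : X) : Prop :=
  ∃ p : X →L[ℝ] ℝ, ‖p‖ = 1 ∧ p x = ‖x‖ ∧ p y = 0

/-- Modulus of supporting convexity `λ⁻_X`. -/
noncomputable def suppConvexity (X : Type*) [NormedAddCommGroup X] [NormedSpace ℝ X]
    (r : ℝ) : ℝ :=
  sInf {v : ℝ | ∃ (x y : X) (t : ℝ), ‖x‖ = 1 ∧ ‖y‖ = 1 ∧ Quasiorth x y ∧
    0 ≤ t ∧ t ≤ r ∧ v = min (suppLam x y t) (suppLam x (-y) t)}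

/-- Modulus of supporting smoothness `λ⁺_X`. -/
noncomputable def suppSmoothness (X : Type*) [NormedAddCommGroup X] [NormedSpace ℝ X]
    (r : ℝ) : ℝ :=
  sSup {v : ℝ | ∃ (x y : X) (t : ℝ), ‖x‖ = 1 ∧ ‖y‖ = 1 ∧ Quasiorth x y ∧
    0 ≤ t ∧ t ≤ r ∧ v = max (suppLam x y t) (suppLam x (-y) t)}

/-- Modulus of convexity `δ_X`. -/
noncomputable def modConvexity (X : Type*) [NormedAddCommGroup X] [NormedSpace ℝ X]
    (ε : ℝ) : ℝ :=
  sInf {v : ℝ | ∃ x y : X, ‖x‖ ≤ 1 ∧ ‖y‖ ≤ 1 ∧ ε ≤ ‖x - y‖ ∧ v = 1 - ‖x + y‖ / 2}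

/-- Modulus of smoothness `ρ_X`. -/
noncomputable def modSmoothness (X : Type*) [NormedAddCommGroup X] [NormedSpace ℝ X]
    (τ : ℝ) : ℝ :=
  sSup {v : ℝ | ∃ x y : X, ‖x‖ = 1 ∧ ‖y‖ = τ ∧ v = ‖x + y‖ / 2 + ‖x - y‖ / 2 - 1}

/-- Banaś modulus `b_X`. -/
noncomputable def banasMod (X : Type*) [NormedAddCommGroup X] [NormedSpace ℝ X]
    (ε : ℝ) : ℝ :=
  sSup {v : ℝ | ∃ x y : X, ‖x‖ ≤ 1 ∧ ‖y‖ ≤ 1 ∧ ‖x - y‖ ≤ ε ∧ v = 1 - ‖x + y‖ / 2}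

/-! Testing the supremum defining `ρ_X(‖y‖/‖x‖)` at the unit pair `(x/‖x‖, y/‖x‖)` gives
`‖x + y‖ + ‖x - y‖ ≤ 2‖x‖ (1 + ρ_X(‖y‖/‖x‖))`, and the norming functional gives
`‖x - y‖ ≥ p (x - y) = ‖x‖ - p y`. -/

section
variable {X : Type*} [NormedAddCommGroup X] [NormedSpace ℝ X]

theorem le_modSmoothness {x : X} (hx : ‖x‖ = 1) (y : X) :
    ‖x + y‖ / 2 + ‖x - y‖ / 2 - 1 ≤ modSmoothness X ‖y‖ := by
  refine le_csSup ⟨‖y‖, ?_⟩ ⟨x, y, hx, rfl, rfl⟩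
  rintro _ ⟨a, b, ha, hb, rfl⟩
  linarith [norm_add_le a b, norm_sub_le a b]

theorem norm_add_le_of_norm_eq_one {x : X} (hx : ‖x‖ = 1) (y : X) {p : X →L[ℝ] ℝ}
    (hp : ‖p‖ ≤ 1) (hpx : p x = 1) :
    ‖x + y‖ ≤ 1 + p y + 2 * modSmoothness X ‖y‖ := by
  have hsub : 1 - p y ≤ ‖x - y‖ :=
    calc 1 - p y = p (x - y) := by rw [map_sub, hpx]
      _ ≤ ‖p‖ * ‖x - y‖ := (le_abs_self _).trans (p.le_opNorm _)
      _ ≤ ‖x - y‖ := mul_le_of_le_one_left (norm_nonneg _) hp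
  linarith [le_modSmoothness hx y]

end

theorem norm_add_le_of_norming_general {X : Type*} [NormedAddCommGroup X] [NormedSpace ℝ X]
    (x y : X) (hx : x ≠ 0)
    (p : X →L[ℝ] ℝ) (hp : ‖p‖ = 1) (hpx : p x = ‖x‖) :
    ‖x + y‖ ≤ ‖x‖ + p y + 2 * ‖x‖ * modSmoothness X (‖y‖ / ‖x‖) := by
  have hc : 0 < ‖x‖ := norm_pos_iff.mpr hx
  have hu : ‖‖x‖⁻¹ • x‖ = 1 := norm_smul_inv_norm hx
  have hpu : p (‖x‖⁻¹ • x) = 1 := by rw [map_smul, hpx, smul_eq_mul, inv_mul_cancel₀ hc.ne']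
  have key := norm_add_le_of_norm_eq_one hu (‖x‖⁻¹ • y) hp.le hpu
  rw [← smul_add, norm_smul_of_nonneg (inv_nonneg.mpr hc.le), map_smul, smul_eq_mul,
    norm_smul_of_nonneg (inv_nonneg.mpr hc.le), inv_mul_eq_div ‖x‖ ‖y‖] at key
  calc ‖x + y‖ = ‖x‖ * (‖x‖⁻¹ * ‖x + y‖) := by field_simp
    _ ≤ ‖x‖ * (1 + ‖x‖⁻¹ * p y + 2 * modSmoothness X (‖y‖ / ‖x‖)) := by gcongr
    _ = ‖x‖ + p y + 2 * ‖x‖ * modSmoothness X (‖y‖ / ‖x‖) := by field_simp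

theorem norm_add_le_of_norming {X : Type*} [NormedAddCommGroup X] [NormedSpace ℝ X]
    [CompleteSpace X] (x y : X) (hx : x ≠ 0)
    (p : X →L[ℝ] ℝ) (hp : ‖p‖ = 1) (hpx : p x = ‖x‖) :
    ‖x + y‖ ≤ ‖x‖ + p y + 2 * ‖x‖ * modSmoothness X (‖y‖ / ‖x‖) :=
  norm_add_le_of_norming_general x y hx p hp hpx
end

section
/- For any Banach space X, the modulus of supporting smoothness λ⁺_X is a convex and continuous function on [0,1]. -/
/-! For unit `x` and a unit `y` quasiorthogonal to `x`, a norming functional of `x` gives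
`‖x + t • y - l • x‖ ≥ 1 - l`, so `λ(x, y, t)` is the least `l` with `‖x + t • y - l • x‖ ≤ 1`.
Convex combinations of such witnesses are witnesses, so `t ↦ λ(x, y, t)` is convex on `[0, 1]`;
it lies between `0` and `t`, hence is monotone, and it is lower semicontinuous because the
condition `‖x + t • y - l • x‖ ≤ 1` is closed in `t`. By monotonicity `λ⁺_X(r)` is the pointwise
supremum of these functions at `r`, so it is convex and lower semicontinuous on `[0, 1]`.
A convex function on `[0, 1]` is continuous inside; at `0` we squeeze `0 ≤ λ⁺_X(r) ≤ r`, and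
at `1` lower semicontinuity and monotonicity combine. -/

open Set Filter Topology

theorem convexOn_ciSup {ι : Sort*} {E : Type*} [AddCommMonoid E] [Module ℝ E] {s : Set E}
    {f : ι → E → ℝ} (hs : Convex ℝ s) (hf : ∀ i, ConvexOn ℝ s (f i))
    (hbdd : ∀ x ∈ s, BddAbove (range fun i => f i x)) :
    ConvexOn ℝ s fun x => ⨆ i, f i x := by
  refine ⟨hs, fun x hx y hy a b ha hb hab => ?_⟩
  rcases isEmpty_or_nonempty ι with hι | hι
  · simp [iSup_of_empty']
  · refine ciSup_le fun i => ((hf i).2 hx hy ha hb hab).trans ?_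
    simp only [smul_eq_mul]
    gcongr
    exacts [le_ciSup (hbdd x hx) i, le_ciSup (hbdd y hy) i]

theorem ConvexOn.monotoneOn_Icc {f : ℝ → ℝ} {a b : ℝ} (hf : ConvexOn ℝ (Icc a b) f)
    (hmin : ∀ x ∈ Icc a b, f a ≤ f x) : MonotoneOn f (Icc a b) := by
  intro s hs t ht hst
  have hmem : s ∈ segment ℝ a t := by
    rw [segment_eq_Icc (hs.1.trans hst)]
    exact ⟨hs.1, hst⟩
  simpa [max_eq_right (hmin t ht)] using
    hf.le_on_segment (left_mem_Icc.2 (hs.1.trans hs.2)) ht hmem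

theorem norm_add_smul_sub_smul_self_le_one {X : Type*} [NormedAddCommGroup X] [NormedSpace ℝ X]
    {x y : X} (hx : ‖x‖ = 1) (hy : ‖y‖ ≤ 1) {t : ℝ}
    (ht : t ∈ Icc (0 : ℝ) 1) : ‖x + t • y - t • x‖ ≤ 1 :=
  calc ‖x + t • y - t • x‖ = ‖(1 - t) • x + t • y‖ := by congr 1; module
    _ ≤ (1 - t) * ‖x‖ + t * ‖y‖ := by
      refine (norm_add_le _ _).trans_eq ?_
      rw [norm_smul, norm_smul, Real.norm_of_nonneg (sub_nonneg.2 ht.2),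
        Real.norm_of_nonneg ht.1]
    _ ≤ 1 := by rw [hx]; nlinarith [ht.1, ht.2]

namespace Quasiorth

variable {X : Type*} [NormedAddCommGroup X] [NormedSpace ℝ X] {x y : X}

theorem neg (h : Quasiorth x y) : Quasiorth x (-y) := by
  obtain ⟨p, hp, hpx, hpy⟩ := h
  exact ⟨p, hp, hpx, by simp [hpy]⟩

theorem one_sub_le_norm (hq : Quasiorth x y) (hx : ‖x‖ = 1) (t l : ℝ) :
    1 - l ≤ ‖x + t • y - l • x‖ := by
  obtain ⟨p, hp, hpx, hpy⟩ := hq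
  have hp_val : p (x + t • y - l • x) = 1 - l := by
    simp only [map_sub, map_add, map_smul, hpx, hpy, hx, smul_eq_mul]
    ring
  calc 1 - l ≤ |p (x + t • y - l • x)| := hp_val ▸ le_abs_self _
    _ ≤ ‖p‖ * ‖x + t • y - l • x‖ := p.le_opNorm _
    _ = ‖x + t • y - l • x‖ := by rw [hp, one_mul]

theorem exists_norm_eq_one (hq : Quasiorth x y) (hx : ‖x‖ = 1) {t l : ℝ}
    (h : ‖x + t • y - l • x‖ ≤ 1) : ∃ m ∈ Icc 0 l, ‖x + t • y - m • x‖ = 1 := by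
  have hcont : Continuous fun m : ℝ => ‖x + t • y - m • x‖ := by fun_prop
  have hl : 0 ≤ l := by linarith [hq.one_sub_le_norm hx t l]
  exact intermediate_value_Icc' hl hcont.continuousOn
    ⟨h, by simpa using hq.one_sub_le_norm hx t 0⟩

theorem bddBelow_suppLam_set (hq : Quasiorth x y) (hx : ‖x‖ = 1) (t : ℝ) :
    BddBelow {l : ℝ | ‖x + t • y - l • x‖ = 1} :=
  ⟨0, fun l (hl : ‖x + t • y - l • x‖ = 1) => by linarith [hq.one_sub_le_norm hx t l]⟩

theorem suppLam_le (hq : Quasiorth x y) (hx : ‖x‖ = 1) {t l : ℝ}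
    (h : ‖x + t • y - l • x‖ ≤ 1) : suppLam x y t ≤ l := by
  obtain ⟨m, hm, hm1⟩ := hq.exists_norm_eq_one hx h
  exact (csInf_le (hq.bddBelow_suppLam_set hx t) hm1).trans hm.2

theorem suppLam_le_self (hq : Quasiorth x y) (hx : ‖x‖ = 1) (hy : ‖y‖ ≤ 1) {t : ℝ}
    (ht : t ∈ Icc (0 : ℝ) 1) : suppLam x y t ≤ t :=
  hq.suppLam_le hx (norm_add_smul_sub_smul_self_le_one hx hy ht)

theorem norm_sub_suppLam_smul (hq : Quasiorth x y) (hx : ‖x‖ = 1) (hy : ‖y‖ ≤ 1) {t : ℝ}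
    (ht : t ∈ Icc (0 : ℝ) 1) : ‖x + t • y - suppLam x y t • x‖ = 1 := by
  obtain ⟨m, -, hm⟩ := hq.exists_norm_eq_one hx (norm_add_smul_sub_smul_self_le_one hx hy ht)
  have hclosed : IsClosed {l : ℝ | ‖x + t • y - l • x‖ = 1} :=
    isClosed_eq (by fun_prop) continuous_const
  exact hclosed.csInf_mem ⟨m, hm⟩ (hq.bddBelow_suppLam_set hx t)

theorem suppLam_nonneg (hq : Quasiorth x y) (hx : ‖x‖ = 1) (hy : ‖y‖ ≤ 1) {t : ℝ}
    (ht : t ∈ Icc (0 : ℝ) 1) : 0 ≤ suppLam x y t := by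
  linarith [hq.one_sub_le_norm hx t (suppLam x y t), hq.norm_sub_suppLam_smul hx hy ht]

theorem suppLam_le_iff (hq : Quasiorth x y) (hx : ‖x‖ = 1) (hy : ‖y‖ ≤ 1) {t l : ℝ}
    (ht : t ∈ Icc (0 : ℝ) 1) (hl : l ≤ 1) :
    suppLam x y t ≤ l ↔ ‖x + t • y - l • x‖ ≤ 1 := by
  refine ⟨fun h => ?_, hq.suppLam_le hx⟩
  have hconv : ConvexOn ℝ univ fun m : ℝ => ‖x + t • y - m • x‖ :=
    ((convexOn_norm convex_univ).comp_affineMap (AffineMap.lineMap (x + t • y) (t • y))).congr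
      fun m _ => by
        simp only [Function.comp, AffineMap.lineMap_apply_module]
        congr 1; module
  have hone : ‖x + t • y - (1 : ℝ) • x‖ ≤ 1 := by
    simpa [norm_smul, abs_of_nonneg ht.1] using mul_le_one₀ ht.2 (norm_nonneg y) hy
  have hmem : l ∈ segment ℝ (suppLam x y t) 1 := by
    rw [segment_eq_Icc (h.trans hl)]
    exact ⟨h, hl⟩
  refine (hconv.le_on_segment (mem_univ _) (mem_univ _) hmem).trans (max_le ?_ hone)
  exact (hq.norm_sub_suppLam_smul hx hy ht).le

theorem suppLam_zero (hq : Quasiorth x y) (hx : ‖x‖ = 1) (hy : ‖y‖ ≤ 1) :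
    suppLam x y 0 = 0 :=
  le_antisymm (hq.suppLam_le_self hx hy (left_mem_Icc.2 zero_le_one))
    (hq.suppLam_nonneg hx hy (left_mem_Icc.2 zero_le_one))

theorem convexOn_suppLam (hq : Quasiorth x y) (hx : ‖x‖ = 1) (hy : ‖y‖ ≤ 1) :
    ConvexOn ℝ (Icc 0 1) (suppLam x y) := by
  refine ⟨convex_Icc 0 1, fun t₁ ht₁ t₂ ht₂ a b ha hb hab => hq.suppLam_le hx ?_⟩
  set l₁ := suppLam x y t₁
  set l₂ := suppLam x y t₂
  calc ‖x + (a • t₁ + b • t₂) • y - (a • l₁ + b • l₂) • x‖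
      = ‖a • (x + t₁ • y - l₁ • x) + b • (x + t₂ • y - l₂ • x)‖ := by
        congr 1
        simp only [smul_eq_mul]
        linear_combination (norm := module) -hab • x
    _ ≤ a * ‖x + t₁ • y - l₁ • x‖ + b * ‖x + t₂ • y - l₂ • x‖ := by
        refine (norm_add_le _ _).trans_eq ?_
        rw [norm_smul, norm_smul, Real.norm_of_nonneg ha, Real.norm_of_nonneg hb]
    _ = 1 := by
        rw [hq.norm_sub_suppLam_smul hx hy ht₁, hq.norm_sub_suppLam_smul hx hy ht₂]
        linarith

theorem monotoneOn_suppLam (hq : Quasiorth x y) (hx : ‖x‖ = 1) (hy : ‖y‖ ≤ 1) :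
    MonotoneOn (suppLam x y) (Icc 0 1) :=
  (hq.convexOn_suppLam hx hy).monotoneOn_Icc fun _ ht => by
    rw [hq.suppLam_zero hx hy]
    exact hq.suppLam_nonneg hx hy ht

theorem lowerSemicontinuousOn_suppLam (hq : Quasiorth x y) (hx : ‖x‖ = 1) (hy : ‖y‖ ≤ 1) :
    LowerSemicontinuousOn (suppLam x y) (Icc 0 1) := by
  intro t₀ ht₀ l hl
  have hl1 : l ≤ 1 := hl.le.trans ((hq.suppLam_le_self hx hy ht₀).trans ht₀.2)
  have hnorm : 1 < ‖x + t₀ • y - l • x‖ :=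
    lt_of_not_ge fun h => hl.not_ge ((hq.suppLam_le_iff hx hy ht₀ hl1).2 h)
  have hcont : Continuous fun t : ℝ => ‖x + t • y - l • x‖ := by fun_prop
  filter_upwards [self_mem_nhdsWithin,
    nhdsWithin_le_nhds (hcont.continuousAt.eventually (lt_mem_nhds hnorm))] with t ht htl
  exact lt_of_not_ge fun h => htl.not_ge ((hq.suppLam_le_iff hx hy ht hl1).1 h)

end Quasiorth

structure UnitQuasiorthPair (X : Type*) [NormedAddCommGroup X] [NormedSpace ℝ X] where
  x : X
  y : X
  norm_x : ‖x‖ = 1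
  norm_y : ‖y‖ = 1
  quasiorth : Quasiorth x y

namespace UnitQuasiorthPair

variable {X : Type*} [NormedAddCommGroup X] [NormedSpace ℝ X]

def neg (p : UnitQuasiorthPair X) : UnitQuasiorthPair X :=
  ⟨p.x, -p.y, p.norm_x, by rw [norm_neg, p.norm_y], p.quasiorth.neg⟩

theorem bddAbove_range_suppLam {r : ℝ} (hr : r ∈ Icc (0 : ℝ) 1) :
    BddAbove (range fun p : UnitQuasiorthPair X => suppLam p.x p.y r) :=
  ⟨r, forall_mem_range.2 fun p => p.quasiorth.suppLam_le_self p.norm_x p.norm_y.le hr⟩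

end UnitQuasiorthPair

section SuppSmoothness

variable {X : Type*} [NormedAddCommGroup X] [NormedSpace ℝ X]

theorem suppSmoothness_eq_iSup {r : ℝ} (hr : r ∈ Icc (0 : ℝ) 1) :
    suppSmoothness X r = ⨆ p : UnitQuasiorthPair X, suppLam p.x p.y r := by
  have hle : ∀ v ∈ {v : ℝ | ∃ (x y : X) (t : ℝ), ‖x‖ = 1 ∧ ‖y‖ = 1 ∧ Quasiorth x y ∧
      0 ≤ t ∧ t ≤ r ∧ v = max (suppLam x y t) (suppLam x (-y) t)},
      v ≤ ⨆ p : UnitQuasiorthPair X, suppLam p.x p.y r := by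
    rintro _ ⟨x, y, t, hx, hy, hq, ht0, htr, rfl⟩
    have ht : t ∈ Icc (0 : ℝ) 1 := ⟨ht0, htr.trans hr.2⟩
    let p : UnitQuasiorthPair X := ⟨x, y, hx, hy, hq⟩
    refine max_le ?_ ?_
    · exact (hq.monotoneOn_suppLam hx hy.le ht hr htr).trans
        (le_ciSup (UnitQuasiorthPair.bddAbove_range_suppLam hr) p)
    · exact (p.neg.quasiorth.monotoneOn_suppLam hx p.neg.norm_y.le ht hr htr).trans
        (le_ciSup (UnitQuasiorthPair.bddAbove_range_suppLam hr) p.neg)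
  refine le_antisymm (Real.sSup_le hle ?_) (Real.iSup_le (fun p => ?_) ?_)
  · exact Real.iSup_nonneg fun p => p.quasiorth.suppLam_nonneg p.norm_x p.norm_y.le hr
  · exact (le_max_left _ _).trans
      (le_csSup ⟨_, hle⟩ ⟨p.x, p.y, r, p.norm_x, p.norm_y, p.quasiorth, hr.1, le_rfl, rfl⟩)
  · refine Real.sSup_nonneg ?_
    rintro _ ⟨x, y, t, hx, hy, hq, ht0, htr, rfl⟩
    exact (hq.suppLam_nonneg hx hy.le ⟨ht0, htr.trans hr.2⟩).trans (le_max_left _ _)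

theorem convexOn_suppSmoothness : ConvexOn ℝ (Icc 0 1) (suppSmoothness X) :=
  (convexOn_ciSup (convex_Icc 0 1)
    (fun p => p.quasiorth.convexOn_suppLam p.norm_x p.norm_y.le)
    fun _ hr => UnitQuasiorthPair.bddAbove_range_suppLam hr).congr
    fun _ hr => (suppSmoothness_eq_iSup hr).symm

theorem lowerSemicontinuousOn_suppSmoothness :
    LowerSemicontinuousOn (suppSmoothness X) (Icc 0 1) := by
  have hsup := lowerSemicontinuousOn_ciSup
    (fun _ hr => UnitQuasiorthPair.bddAbove_range_suppLam (X := X) hr)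
    fun p => p.quasiorth.lowerSemicontinuousOn_suppLam p.norm_x p.norm_y.le
  intro r hr
  exact LowerSemicontinuousWithinAt.congr_of_eventuallyEq (hsup r hr) hr <|
    eventually_nhdsWithin_of_forall fun _ hs => (suppSmoothness_eq_iSup hs).symm

theorem suppSmoothness_mem_Icc {r : ℝ} (hr : r ∈ Icc (0 : ℝ) 1) :
    suppSmoothness X r ∈ Icc 0 r := by
  rw [suppSmoothness_eq_iSup hr]
  exact ⟨Real.iSup_nonneg fun p => p.quasiorth.suppLam_nonneg p.norm_x p.norm_y.le hr,
    Real.iSup_le (fun p => p.quasiorth.suppLam_le_self p.norm_x p.norm_y.le hr) hr.1⟩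

theorem suppSmoothness_zero : suppSmoothness X 0 = 0 :=
  le_antisymm (suppSmoothness_mem_Icc (left_mem_Icc.2 zero_le_one)).2
    (suppSmoothness_mem_Icc (left_mem_Icc.2 zero_le_one)).1

theorem monotoneOn_suppSmoothness : MonotoneOn (suppSmoothness X) (Icc 0 1) :=
  convexOn_suppSmoothness.monotoneOn_Icc fun _ hr => by
    rw [suppSmoothness_zero]
    exact (suppSmoothness_mem_Icc hr).1

end SuppSmoothness

theorem suppSmoothness_convexOn_continuousOn_general {X : Type*} [NormedAddCommGroup X]
    [NormedSpace ℝ X] :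
    ConvexOn ℝ (Set.Icc (0 : ℝ) 1) (suppSmoothness X) ∧
    ContinuousOn (suppSmoothness X) (Set.Icc (0 : ℝ) 1) := by
  refine ⟨convexOn_suppSmoothness, convexOn_suppSmoothness.continuousOn_Icc zero_lt_one ?_ ?_⟩
  · rw [← continuousWithinAt_Icc_iff_Ici zero_lt_one, ContinuousWithinAt, suppSmoothness_zero]
    refine tendsto_of_tendsto_of_tendsto_of_le_of_le' tendsto_const_nhds
      (tendsto_nhdsWithin_of_tendsto_nhds tendsto_id) ?_ ?_ <;>
      filter_upwards [self_mem_nhdsWithin] with r hr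
    exacts [(suppSmoothness_mem_Icc hr).1, (suppSmoothness_mem_Icc hr).2]
  · rw [← continuousWithinAt_Icc_iff_Iic zero_lt_one,
      continuousWithinAt_iff_lower_upperSemicontinuousWithinAt]
    refine ⟨lowerSemicontinuousOn_suppSmoothness 1 (right_mem_Icc.2 zero_le_one),
      fun v hv => ?_⟩
    filter_upwards [self_mem_nhdsWithin] with r hr
    exact (monotoneOn_suppSmoothness hr (right_mem_Icc.2 zero_le_one) hr.2).trans_lt hv

theorem suppSmoothness_convexOn_continuousOn {X : Type*} [NormedAddCommGroup X]
    [NormedSpace ℝ X] [CompleteSpace X] :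
    ConvexOn ℝ (Set.Icc (0 : ℝ) 1) (suppSmoothness X) ∧
    ContinuousOn (suppSmoothness X) (Set.Icc (0 : ℝ) 1) :=
  suppSmoothness_convexOn_continuousOn_general
end

section
/- For any Banach space X and r ∈ [0, 1/2], the modulus of supporting smoothness satisfies λ⁺_X(r) ≤ ρ_X(2r), where ρ_X is the modulus of smoothness. -/
lemma modSmoothness_bddAbove (X : Type*) [NormedAddCommGroup X] [NormedSpace ℝ X]
    (τ : ℝ) :
    BddAbove {v : ℝ | ∃ x y : X, ‖x‖ = 1 ∧ ‖y‖ = τ ∧ v = ‖x + y‖ / 2 + ‖x - y‖ / 2 - 1} := by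
  refine ⟨|τ|, ?_⟩
  rintro v ⟨x, y, hx, hy, rfl⟩
  have h1 : ‖x + y‖ ≤ 1 + |τ| := by
    calc ‖x + y‖ ≤ ‖x‖ + ‖y‖ := norm_add_le _ _
    _ ≤ 1 + |τ| := by rw [hx, hy]; simp [le_abs_self]
  have h2 : ‖x - y‖ ≤ 1 + |τ| := by
    calc ‖x - y‖ ≤ ‖x‖ + ‖y‖ := norm_sub_le _ _
    _ ≤ 1 + |τ| := by rw [hx, hy]; simp [le_abs_self]
  linarith

lemma modSmoothness_nonneg (X : Type*) [NormedAddCommGroup X] [NormedSpace ℝ X]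
    [Nontrivial X] (τ : ℝ) (h0 : 0 ≤ τ) (h1 : τ ≤ 1) : 0 ≤ modSmoothness X τ := by
  obtain ⟨x, hx⟩ := exists_norm_eq X (zero_le_one (α := ℝ))
  have hmem : (0 : ℝ) ∈ {v : ℝ | ∃ x y : X, ‖x‖ = 1 ∧ ‖y‖ = τ ∧
      v = ‖x + y‖ / 2 + ‖x - y‖ / 2 - 1} := by
    refine ⟨x, τ • x, hx, ?_, ?_⟩
    · rw [norm_smul, hx, Real.norm_eq_abs, abs_of_nonneg h0, mul_one]
    · have e1 : x + τ • x = (1 + τ) • x := by module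
      have e2 : x - τ • x = (1 - τ) • x := by module
      rw [e1, e2, norm_smul, norm_smul, hx, Real.norm_eq_abs, Real.norm_eq_abs,
        abs_of_nonneg (by linarith : (0:ℝ) ≤ 1 + τ), abs_of_nonneg (by linarith : (0:ℝ) ≤ 1 - τ)]
      ring
  exact le_csSup (modSmoothness_bddAbove X τ) hmem
lemma key_suppLam_le {X : Type*} [NormedAddCommGroup X] [NormedSpace ℝ X] [Nontrivial X]
    (x y : X) (t r : ℝ) (hx : ‖x‖ = 1) (hy : ‖y‖ = 1) (hq : Quasiorth x y)
    (ht0 : 0 ≤ t) (htr : t ≤ r) (hr1 : r ≤ 1 / 2) :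
    suppLam x y t ≤ modSmoothness X (2 * r) := by
  obtain ⟨p, hp, hpx, hpy⟩ := hq
  rw [hx] at hpx
  have hr0 : 0 ≤ r := le_trans ht0 htr
  set ρ := modSmoothness X (2 * r) with hρdef
  have hρ0 : 0 ≤ ρ := modSmoothness_nonneg X (2 * r) (by linarith) (by linarith)
  -- |p z| ≤ ‖z‖
  have hple : ∀ z : X, |p z| ≤ ‖z‖ := by
    intro z
    have := p.le_opNorm z
    rwa [hp, one_mul, Real.norm_eq_abs] at this
  -- ‖x - (2r)•y‖ ≥ 1
  have hsub : (1 : ℝ) ≤ ‖x - (2 * r) • y‖ := by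
    have h := hple (x - (2 * r) • y)
    have : p (x - (2 * r) • y) = 1 := by
      rw [map_sub, map_smul, hpx, hpy]; simp
    rw [this] at h
    calc (1:ℝ) ≤ |1| := by norm_num
    _ ≤ ‖x - (2 * r) • y‖ := h
  -- ‖x + (2r)•y‖ ≤ 2ρ + 1
  have h1 : ‖x + (2 * r) • y‖ ≤ 2 * ρ + 1 := by
    have hmem : (‖x + (2 * r) • y‖ / 2 + ‖x - (2 * r) • y‖ / 2 - 1) ∈
        {v : ℝ | ∃ x y : X, ‖x‖ = 1 ∧ ‖y‖ = 2 * r ∧ v = ‖x + y‖ / 2 + ‖x - y‖ / 2 - 1} := by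
      exact ⟨x, (2 * r) • y, hx, by
        rw [norm_smul, hy, Real.norm_eq_abs, abs_of_nonneg (by linarith : (0:ℝ) ≤ 2*r), mul_one],
        rfl⟩
    have hρge : ‖x + (2 * r) • y‖ / 2 + ‖x - (2 * r) • y‖ / 2 - 1 ≤ ρ :=
      le_csSup (modSmoothness_bddAbove X (2 * r)) hmem
    linarith
  -- ‖x + (2t)•y‖ ≤ 2ρ + 1
  have h2 : ‖x + (2 * t) • y‖ ≤ 2 * ρ + 1 := by
    rcases eq_or_lt_of_le hr0 with hr | hr
    · have ht : t = 0 := le_antisymm (htr.trans hr.symm.le) ht0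
      rw [ht]; simp [hx]; linarith
    · have hrne : r ≠ 0 := ne_of_gt hr
      have hid : x + (2 * t) • y = (1 - t / r) • x + (t / r) • (x + (2 * r) • y) := by
        rw [smul_add, smul_smul]
        have : t / r * (2 * r) = 2 * t := by field_simp
        rw [this]; module
      have htr' : t / r ≤ 1 := (div_le_one hr).2 htr
      have htr0 : 0 ≤ t / r := div_nonneg ht0 hr0
      calc ‖x + (2 * t) • y‖ ≤ ‖(1 - t / r) • x‖ + ‖(t / r) • (x + (2 * r) • y)‖ := by
            rw [hid]; exact norm_add_le _ _
      _ = (1 - t / r) * 1 + (t / r) * ‖x + (2 * r) • y‖ := by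
            rw [norm_smul, norm_smul, hx, Real.norm_eq_abs, Real.norm_eq_abs,
              abs_of_nonneg (by linarith), abs_of_nonneg htr0]
      _ ≤ (1 - t / r) * 1 + (t / r) * (2 * ρ + 1) := by nlinarith
      _ = 1 + 2 * ρ * (t / r) := by ring
      _ ≤ 2 * ρ + 1 := by nlinarith
  -- choose λ₀
  set l0 := min ρ (1 / 2 : ℝ) with hl0def
  have hl00 : 0 ≤ l0 := le_min hρ0 (by norm_num)
  have hl0ρ : l0 ≤ ρ := min_le_left _ _
  have hf0 : ‖x + t • y - l0 • x‖ ≤ 1 := by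
    rcases le_total ρ (1 / 2 : ℝ) with hc | hc
    · have : l0 = ρ := min_eq_left hc
      rw [this]
      have hid : x + t • y - ρ • x = (2⁻¹ : ℝ) • ((x + (2 * t) • y) + (1 - 2 * ρ) • x) := by
        module
      have hb : ‖x + (2 * t) • y + (1 - 2 * ρ) • x‖ ≤ (2 * ρ + 1) + (1 - 2 * ρ) := by
        have htri := norm_add_le (x + (2 * t) • y) ((1 - 2 * ρ) • x)
        rw [norm_smul, hx, Real.norm_eq_abs, mul_one,
          abs_of_nonneg (by linarith : (0:ℝ) ≤ 1 - 2 * ρ)] at htri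
        linarith
      rw [hid, norm_smul, Real.norm_eq_abs, abs_of_nonneg (by norm_num : (0:ℝ) ≤ (2⁻¹:ℝ))]
      linarith
    · have : l0 = (1/2 : ℝ) := min_eq_right hc
      rw [this]
      have hid : x + t • y - (1/2 : ℝ) • x = (2⁻¹ : ℝ) • (x + (2 * t) • y) := by module
      rw [hid, norm_smul, Real.norm_eq_abs, abs_of_nonneg (by norm_num : (0:ℝ) ≤ (2⁻¹:ℝ))]
      have hle2 : ‖x + (2 * t) • y‖ ≤ 2 := by
        calc ‖x + (2 * t) • y‖ ≤ ‖x‖ + ‖(2 * t) • y‖ := norm_add_le _ _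
        _ = 1 + 2 * t := by
              rw [hx, norm_smul, hy, Real.norm_eq_abs,
                abs_of_nonneg (by linarith : (0:ℝ) ≤ 2 * t), mul_one]
        _ ≤ 2 := by linarith
      linarith
  -- f 0 ≥ 1
  have hfzero : (1 : ℝ) ≤ ‖x + t • y - (0 : ℝ) • x‖ := by
    have h := hple (x + t • y - (0 : ℝ) • x)
    have : p (x + t • y - (0 : ℝ) • x) = 1 := by
      rw [map_sub, map_add, map_smul, map_smul, hpx, hpy]; simp
    rw [this] at h
    calc (1:ℝ) ≤ |1| := by norm_num
    _ ≤ _ := h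
  -- IVT
  have hcont : ContinuousOn (fun l : ℝ => ‖x + t • y - l • x‖) (Set.Icc 0 l0) := by
    apply Continuous.continuousOn; fun_prop
  have hIVT := intermediate_value_Icc' hl00 hcont
  have h1mem : (1 : ℝ) ∈ Set.Icc (‖x + t • y - l0 • x‖) (‖x + t • y - (0:ℝ) • x‖) :=
    ⟨hf0, hfzero⟩
  obtain ⟨c, hc_mem, hfc⟩ := hIVT h1mem
  -- bounded below
  have hbdd : BddBelow {l : ℝ | ‖x + t • y - l • x‖ = 1} := by
    refine ⟨0, fun l hl => ?_⟩
    have h := hple (x + t • y - l • x)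
    have hpval : p (x + t • y - l • x) = 1 - l := by
      rw [map_sub, map_add, map_smul, map_smul, hpx, hpy]; simp
    rw [hpval, hl] at h
    cases abs_le.1 h with
    | intro h1 h2 => linarith
  have : suppLam x y t ≤ c := csInf_le hbdd hfc
  exact this.trans (hc_mem.2.trans hl0ρ)


theorem suppSmoothness_le_modSmoothness {X : Type*} [NormedAddCommGroup X] [NormedSpace ℝ X]
    [CompleteSpace X] (r : ℝ) (hr0 : 0 ≤ r) (hr1 : r ≤ 1 / 2) :
    suppSmoothness X r ≤ modSmoothness X (2 * r) := by
  rcases subsingleton_or_nontrivial X with hS | hN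
  · have hSe : {v : ℝ | ∃ (x y : X) (t : ℝ), ‖x‖ = 1 ∧ ‖y‖ = 1 ∧ Quasiorth x y ∧
        0 ≤ t ∧ t ≤ r ∧ v = max (suppLam x y t) (suppLam x (-y) t)} = ∅ := by
      ext v
      simp only [Set.mem_setOf_eq, Set.mem_empty_iff_false, iff_false, not_exists]
      rintro x y t ⟨hx, -⟩
      rw [Subsingleton.eq_zero x, norm_zero] at hx
      norm_num at hx
    have hTe : {v : ℝ | ∃ x y : X, ‖x‖ = 1 ∧ ‖y‖ = 2 * r ∧
        v = ‖x + y‖ / 2 + ‖x - y‖ / 2 - 1} = ∅ := by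
      ext v
      simp only [Set.mem_setOf_eq, Set.mem_empty_iff_false, iff_false, not_exists]
      rintro x y ⟨hx, -⟩
      rw [Subsingleton.eq_zero x, norm_zero] at hx
      norm_num at hx
    rw [suppSmoothness, modSmoothness, hSe, hTe]
  · rw [suppSmoothness]
    apply Real.sSup_le
    · rintro v ⟨x, y, t, hx, hy, hq, ht0, htr, rfl⟩
      have hq' : Quasiorth x (-y) := by
        obtain ⟨p, hp, hpx, hpy⟩ := hq
        exact ⟨p, hp, hpx, by simp [hpy]⟩
      exact max_le (key_suppLam_le x y t r hx hy hq ht0 htr hr1)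
        (key_suppLam_le x (-y) t r hx (by simp [hy]) hq' ht0 htr hr1)
    · exact modSmoothness_nonneg X (2 * r) (by linarith) (by linarith)
end

section
/- For any Banach space X and r ∈ [0,1], the modulus of smoothness and the modulus of supporting smoothness satisfy ρ_X(r/2) ≤ λ⁺_X(r). -/
/-! Let `‖x‖ = 1`, `‖y‖ = r / 2`, and let `p` be a norming functional of `x`; replacing `y` by `-y`
we may take `s = p y ≥ 0`. Then `y = s • x + c • u` with `u` a unit vector quasiorthogonal to `x`
and `0 ≤ c ≤ r`, so `x ± y = (1 ± s) • x ± c • u`. Testing a norming functional of `x ± y` against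
the unit vector `x ± r • u - λ(x, ±u, r) • x` gives `‖x ± y‖ ≤ 1 ± s + λ(x, ±u, r)`, and adding the
two bounds gives `‖x + y‖ + ‖x - y‖ ≤ 2 + 2 λ⁺(r)`. -/

open Set

section

variable {X : Type*} [NormedAddCommGroup X] [NormedSpace ℝ X]

lemma apply_le_norm_of_opNorm_le_one {p : X →L[ℝ] ℝ} (hp : ‖p‖ ≤ 1) (v : X) : p v ≤ ‖v‖ :=
  (le_abs_self _).trans (by simpa using p.le_of_opNorm_le hp v)

section SuppLam

variable {x u : X} {p : X →L[ℝ] ℝ} {t : ℝ}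

lemma apply_add_smul_sub_smul (hpx : p x = 1) (hpu : p u = 0) (l : ℝ) :
    p (x + t • u - l • x) = 1 - l := by
  simp [hpx, hpu]

lemma nonneg_of_norm_add_smul_sub_smul_eq_one (hp : ‖p‖ ≤ 1) (hpx : p x = 1) (hpu : p u = 0)
    {l : ℝ} (hl : ‖x + t • u - l • x‖ = 1) : 0 ≤ l := by
  have h := apply_le_norm_of_opNorm_le_one hp (x + t • u - l • x)
  rw [apply_add_smul_sub_smul hpx hpu, hl] at h
  linarith

lemma exists_mem_Icc_norm_add_smul_sub_smul_eq_one (hp : ‖p‖ ≤ 1) (hpx : p x = 1)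
    (hpu : p u = 0) (ht : ‖t • u‖ ≤ 1) : ∃ l ∈ Icc (0 : ℝ) 1, ‖x + t • u - l • x‖ = 1 := by
  refine intermediate_value_Icc' zero_le_one (by fun_prop) ⟨by simpa using ht, ?_⟩
  have h := apply_le_norm_of_opNorm_le_one hp (x + t • u - (0 : ℝ) • x)
  rwa [apply_add_smul_sub_smul hpx hpu, sub_zero] at h

lemma suppLam_spec (hp : ‖p‖ ≤ 1) (hpx : p x = 1) (hpu : p u = 0) (ht : ‖t • u‖ ≤ 1) :
    0 ≤ suppLam x u t ∧ suppLam x u t ≤ 1 ∧ ‖x + t • u - suppLam x u t • x‖ = 1 := by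
  obtain ⟨l, hl, hlK⟩ := exists_mem_Icc_norm_add_smul_sub_smul_eq_one hp hpx hpu ht
  have hbdd : BddBelow {l : ℝ | ‖x + t • u - l • x‖ = 1} :=
    ⟨0, fun _ => nonneg_of_norm_add_smul_sub_smul_eq_one hp hpx hpu⟩
  have hclosed : IsClosed {l : ℝ | ‖x + t • u - l • x‖ = 1} :=
    isClosed_eq (by fun_prop) continuous_const
  have hmem := hclosed.csInf_mem ⟨l, hlK⟩ hbdd
  exact ⟨nonneg_of_norm_add_smul_sub_smul_eq_one hp hpx hpu hmem,
    (csInf_le hbdd hlK).trans hl.2, hmem⟩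

lemma Quasiorth.neg_s12 (h : Quasiorth x u) : Quasiorth x (-u) := by
  obtain ⟨p, hp, hpx, hpu⟩ := h
  exact ⟨p, hp, hpx, by simp [hpu]⟩

lemma Quasiorth.suppLam_spec (h : Quasiorth x u) (hx : ‖x‖ = 1) (ht : ‖t • u‖ ≤ 1) :
    0 ≤ suppLam x u t ∧ suppLam x u t ≤ 1 ∧ ‖x + t • u - suppLam x u t • x‖ = 1 := by
  obtain ⟨p, hp, hpx, hpu⟩ := h
  exact _root_.suppLam_spec hp.le (hpx.trans hx) hpu ht

lemma Quasiorth.max_suppLam_mem_Icc (h : Quasiorth x u) (hx : ‖x‖ = 1) (hu : ‖u‖ = 1)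
    (ht0 : 0 ≤ t) (ht1 : t ≤ 1) : max (suppLam x u t) (suppLam x (-u) t) ∈ Icc 0 1 := by
  have ht : ‖t • u‖ ≤ 1 := by rwa [norm_smul, hu, mul_one, Real.norm_of_nonneg ht0]
  obtain ⟨h0, h1, -⟩ := h.suppLam_spec hx ht
  obtain ⟨-, h1', -⟩ := h.neg_s12.suppLam_spec hx (by rwa [smul_neg, norm_neg])
  exact ⟨le_max_of_le_left h0, max_le h1 h1'⟩

end SuppLam

lemma suppSmoothness_nonneg {r : ℝ} (hr : r ≤ 1) : 0 ≤ suppSmoothness X r :=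
  Real.sSup_nonneg <| by
    rintro _ ⟨x, u, t, hx, hu, hxu, ht0, htr, rfl⟩
    exact (hxu.max_suppLam_mem_Icc hx hu ht0 (htr.trans hr)).1

lemma max_suppLam_le_suppSmoothness {x u : X} {r t : ℝ} (hr : r ≤ 1) (hx : ‖x‖ = 1)
    (hu : ‖u‖ = 1) (hxu : Quasiorth x u) (ht0 : 0 ≤ t) (htr : t ≤ r) :
    max (suppLam x u t) (suppLam x (-u) t) ≤ suppSmoothness X r := by
  refine le_csSup ⟨1, ?_⟩ ⟨x, u, t, hx, hu, hxu, ht0, htr, rfl⟩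
  rintro _ ⟨x, u, t, hx, hu, hxu, ht0, htr, rfl⟩
  exact (hxu.max_suppLam_mem_Icc hx hu ht0 (htr.trans hr)).2

/-- A norming functional of `a • x + c • v`, tested against `x + r • v - L • x`, gives the bound. -/
lemma norm_smul_add_smul_le {x v : X} {r L a c : ℝ} (hr : 0 < r) (hx : ‖x‖ ≤ 1) (hL : 0 ≤ L)
    (hv : ‖x + r • v - L • x‖ ≤ 1) (hc : 0 ≤ c) (hcr : c ≤ r)
    (hcw : c ≤ r * ‖a • x + c • v‖) (ha : ‖a • x + c • v - x‖ ≤ a) :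
    ‖a • x + c • v‖ ≤ a + L := by
  obtain ⟨q, hq, hqw⟩ := exists_dual_vector'' ℝ (a • x + c • v)
  replace hqw : q (a • x + c • v) = ‖a • x + c • v‖ := by simpa using hqw
  set b := ‖a • x + c • v‖
  have hqx : q x ≤ 1 := (apply_le_norm_of_opNorm_le_one hq x).trans hx
  rcases le_or_gt (q x) 0 with hqx0 | hqx0
  · have h := apply_le_norm_of_opNorm_le_one hq (a • x + c • v - x)
    rw [map_sub, hqw] at h
    linarith
  have hqv : c * q v = b - a * q x := by
    rw [← hqw]
    simp only [map_add, map_smul, smul_eq_mul]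
    ring
  have hdual : c * (q x + r * q v - L * q x) ≤ c := by
    have h := (apply_le_norm_of_opNorm_le_one hq (x + r • v - L • x)).trans hv
    simp only [map_sub, map_add, map_smul, smul_eq_mul] at h
    exact mul_le_of_le_one_right hc h
  have hkey : 0 ≤ q x * r * (a + L - b) := by
    nlinarith [mul_nonneg (sub_nonneg.2 hqx) (sub_nonneg.2 hcw),
      mul_nonneg (mul_nonneg hqx0.le hL) (sub_nonneg.2 hcr)]
  linarith [(mul_nonneg_iff_of_pos_left (mul_pos hqx0 hr)).1 hkey]

lemma norm_add_smul_add_norm_sub_smul {x : X} {s : ℝ} (hx : ‖x‖ = 1) (hs : |s| ≤ 1) :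
    ‖x + s • x‖ + ‖x - s • x‖ = 2 := by
  rw [show x + s • x = (1 + s) • x by module, show x - s • x = (1 - s) • x by module,
    norm_smul, norm_smul, hx, Real.norm_of_nonneg (by linarith [neg_abs_le s]),
    Real.norm_of_nonneg (by linarith [le_abs_self s])]
  ring

lemma exists_quasiorth_eq_smul_add_smul {x y : X} {p : X →L[ℝ] ℝ} (hx : ‖x‖ = 1)
    (hp : ‖p‖ = 1) (hpx : p x = 1) (hy : y - p y • x ≠ 0) :
    ∃ u : X, ‖u‖ = 1 ∧ Quasiorth x u ∧ y = p y • x + ‖y - p y • x‖ • u := by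
  refine ⟨‖y - p y • x‖⁻¹ • (y - p y • x), norm_smul_inv_norm hy,
    ⟨p, hp, hpx.trans hx.symm, by simp [hpx]⟩, ?_⟩
  rw [smul_smul, mul_inv_cancel₀ (norm_ne_zero_iff.2 hy), one_smul, add_sub_cancel]

lemma norm_sub_smul_le_mul_norm_sub {x y : X} {r s : ℝ} (hr : r ≤ 1) (hy : ‖y‖ = r / 2)
    (hs : 0 ≤ s) (hsr : s ≤ r / 2) (hxy : 1 - s ≤ ‖x - y‖) : ‖y - s • x‖ ≤ r * ‖x - y‖ := by
  have h : ‖y - s • x‖ ≤ s * ‖x - y‖ + (1 - s) * (r / 2) := calc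
    ‖y - s • x‖ = ‖(-s) • (x - y) + (1 - s) • y‖ := by
      rw [show (-s) • (x - y) + (1 - s) • y = y - s • x by module]
    _ ≤ ‖(-s) • (x - y)‖ + ‖(1 - s) • y‖ := norm_add_le _ _
    _ = s * ‖x - y‖ + (1 - s) * (r / 2) := by
      rw [norm_smul, norm_smul, hy, norm_neg, Real.norm_of_nonneg hs,
        Real.norm_of_nonneg (by linarith)]
  nlinarith [mul_nonneg (by linarith : 0 ≤ r - s) (by linarith : 0 ≤ ‖x - y‖ - (1 - s)),
    mul_nonneg (by linarith : 0 ≤ 1 - s) (by linarith : 0 ≤ r / 2 - s)]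

lemma norm_add_add_norm_sub_le_of_apply_nonneg {x y : X} {p : X →L[ℝ] ℝ} {r : ℝ} (hr : r ≤ 1)
    (hx : ‖x‖ = 1) (hy : ‖y‖ = r / 2) (hp : ‖p‖ = 1) (hpx : p x = 1) (hpy : 0 ≤ p y) :
    ‖x + y‖ + ‖x - y‖ ≤ 2 + 2 * suppSmoothness X r := by
  set s := p y
  have hsr : s ≤ r / 2 := hy ▸ apply_le_norm_of_opNorm_le_one hp.le y
  rcases eq_or_ne (y - s • x) 0 with hz | hz
  · rw [sub_eq_zero.1 hz,
      norm_add_smul_add_norm_sub_smul hx (abs_le.2 ⟨by linarith, by linarith⟩)]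
    linarith [suppSmoothness_nonneg (X := X) hr]
  obtain ⟨u, hu, hxu, hyu⟩ := exists_quasiorth_eq_smul_add_smul hx hp hpx hz
  set c := ‖y - s • x‖
  have hc : 0 < c := norm_pos_iff.2 hz
  have hcr : c ≤ r := by
    have h := norm_sub_le y (s • x)
    rw [norm_smul, hx, hy, mul_one, Real.norm_of_nonneg hpy] at h
    linarith
  have hr0 : 0 < r := hc.trans_le hcr
  have hru : ‖r • u‖ ≤ 1 := by rwa [norm_smul, hu, mul_one, Real.norm_of_nonneg hr0.le]
  obtain ⟨hL1, -, hL1e⟩ := hxu.suppLam_spec hx hru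
  obtain ⟨hL2, -, hL2e⟩ := hxu.neg_s12.suppLam_spec hx (by rwa [smul_neg, norm_neg])
  have hadd_lb : 1 + s ≤ ‖x + y‖ := by
    simpa [hpx] using apply_le_norm_of_opNorm_le_one hp.le (x + y)
  have hsub_lb : 1 - s ≤ ‖x - y‖ := by
    simpa [hpx] using apply_le_norm_of_opNorm_le_one hp.le (x - y)
  have hadd_ub : ‖x + y‖ ≤ 1 + s + suppLam x u r := by
    have hw : x + y = (1 + s) • x + c • u := by rw [hyu]; module
    rw [hw] at hadd_lb ⊢
    refine norm_smul_add_smul_le hr0 hx.le hL1 hL1e.le hc.le hcr (by nlinarith) ?_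
    rw [← hw, add_sub_cancel_left, hy]
    linarith
  have hsub_ub : ‖x - y‖ ≤ 1 - s + suppLam x (-u) r := by
    have hw : x - y = (1 - s) • x + c • -u := by rw [hyu]; module
    have hcz := norm_sub_smul_le_mul_norm_sub hr hy hpy hsr hsub_lb
    rw [hw] at hcz ⊢
    refine norm_smul_add_smul_le hr0 hx.le hL2 hL2e.le hc.le hcr hcz ?_
    rw [← hw, sub_sub_cancel_left, norm_neg, hy]
    linarith
  have hmax := max_suppLam_le_suppSmoothness hr hx hu hxu hr0.le le_rfl
  linarith [le_max_left (suppLam x u r) (suppLam x (-u) r),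
    le_max_right (suppLam x u r) (suppLam x (-u) r)]

lemma norm_add_add_norm_sub_le {x y : X} {r : ℝ} (hr : r ≤ 1) (hx : ‖x‖ = 1)
    (hy : ‖y‖ = r / 2) : ‖x + y‖ + ‖x - y‖ ≤ 2 + 2 * suppSmoothness X r := by
  obtain ⟨p, hp, hpx⟩ := exists_dual_vector ℝ x (by simp [hx])
  replace hpx : p x = 1 := by simpa [hx] using hpx
  rcases le_total 0 (p y) with hpy | hpy
  · exact norm_add_add_norm_sub_le_of_apply_nonneg hr hx hy hp hpx hpy
  · have h := norm_add_add_norm_sub_le_of_apply_nonneg hr hx (by rwa [norm_neg]) hp hpx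
      (by simpa using hpy)
    rwa [← sub_eq_add_neg, sub_neg_eq_add, add_comm] at h

end

theorem modSmoothness_le_suppSmoothness_general {X : Type*} [NormedAddCommGroup X] [NormedSpace ℝ X]
    (r : ℝ) (hr1 : r ≤ 1) :
    modSmoothness X (r / 2) ≤ suppSmoothness X r := by
  refine Real.sSup_le ?_ (suppSmoothness_nonneg hr1)
  rintro _ ⟨x, y, hx, hy, rfl⟩
  linarith [norm_add_add_norm_sub_le hr1 hx hy]

theorem modSmoothness_le_suppSmoothness {X : Type*} [NormedAddCommGroup X] [NormedSpace ℝ X]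
    [CompleteSpace X] (r : ℝ) (hr0 : 0 ≤ r) (hr1 : r ≤ 1) :
    modSmoothness X (r / 2) ≤ suppSmoothness X r :=
  modSmoothness_le_suppSmoothness_general r hr1
end
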